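/- arXiv:2402.13952 — 2 statements merged into one kernel-verified Lean document; each statement's English description precedes it below -/
import Mathlib

section
/- Let f : {-1,1}^n → ℝ, let J ⊆ [n], let k ≥ 0 be an integer, and let μ ≥ 0 be such that Σ_{T ⊆ [n] : 2^k ≤ |T ∩ J^c| < 2^{k+1}} f̂(T)² ≥ μ. Let ρ = (S, y) be the random restriction in which every j ∈ J is fixed to an independent uniformly random bit, and each i ∈ J^c is kept alive independently with probability p = 2^{−k} (and otherwise fixed to an independent uniformly random bit). Then E_ρ[ Σ_{i ∈ S} f̂_ρ({i})² ] ≥ μ/20. -/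
open Finset

noncomputable section

/-- The ±1 value of a Boolean bit: `true ↦ 1`, `false ↦ -1`. -/
def sgnB (b : Bool) : ℝ := if b then 1 else -1

/-- The character `χ_S(x) = ∏_{i ∈ S} x_i` on the Boolean cube. -/
def chiB {n : ℕ} (S : Finset (Fin n)) (x : Fin n → Bool) : ℝ := ∏ i ∈ S, sgnB (x i)

/-- Expectation over a uniformly random point of the cube `{-1,1}^n`. -/
def bexpect {n : ℕ} (f : (Fin n → Bool) → ℝ) : ℝ := (∑ x : Fin n → Bool, f x) / 2 ^ n

/-- The Fourier coefficient `f̂(S) = E_x [f(x) χ_S(x)]`. -/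
def fCoeff {n : ℕ} (f : (Fin n → Bool) → ℝ) (S : Finset (Fin n)) : ℝ :=
  bexpect (fun x => f x * chiB S x)

/-- `f` has degree at most `d`: all Fourier coefficients above level `d` vanish. -/
def degLE {n : ℕ} (f : (Fin n → Bool) → ℝ) (d : ℕ) : Prop :=
  ∀ S : Finset (Fin n), d < S.card → fCoeff f S = 0

/-- `Var[f] = Σ_{S ≠ ∅} f̂(S)²`. -/
def totalVar {n : ℕ} (f : (Fin n → Bool) → ℝ) : ℝ :=
  ∑ S ∈ univ.filter (fun S : Finset (Fin n) => S ≠ ∅), (fCoeff f S) ^ 2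

/-- `Inf_j[f] = Σ_{S ∋ j} f̂(S)²`. -/
def influence {n : ℕ} (f : (Fin n → Bool) → ℝ) (j : Fin n) : ℝ :=
  ∑ S ∈ univ.filter (fun S : Finset (Fin n) => j ∈ S), (fCoeff f S) ^ 2

/-- The restriction `f_ρ` for `ρ = (S, y)`: alive coordinates from `z`, dead ones from `y`.
(The restricted function is encoded as a function on the full cube which only depends on
the coordinates in `S`.) -/
def restrictFn {n : ℕ} (f : (Fin n → Bool) → ℝ) (S : Finset (Fin n)) (y : Fin n → Bool) :
    (Fin n → Bool) → ℝ :=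
  fun z => f (fun i => if i ∈ S then z i else y i)

/-- Probability that the alive set of a random restriction with survival probability `p`
equals `S`. -/
def aliveProb {n : ℕ} (p : ℝ) (S : Finset (Fin n)) : ℝ :=
  p ^ S.card * (1 - p) ^ (n - S.card)

/-- Expectation over a random restriction `ρ = (S, y)` with survival probability `p`:
each coordinate is alive independently with probability `p`, and dead coordinates get
independent uniform bits.  (`y` is sampled as a full uniform point of the cube; its values
on alive coordinates are irrelevant whenever the integrand ignores them.) -/
def rexpect {n : ℕ} (p : ℝ) (G : Finset (Fin n) → (Fin n → Bool) → ℝ) : ℝ :=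
  ∑ S : Finset (Fin n), aliveProb p S * bexpect (fun y => G S y)

open Classical in
/-- Probability of an event under a random restriction with survival probability `p`. -/
def rprob {n : ℕ} (p : ℝ) (E : Finset (Fin n) → (Fin n → Bool) → Prop) : ℝ :=
  rexpect p (fun S y => if E S y then 1 else 0)

/-- Expectation over the random restriction which kills every coordinate of `J`
(assigning it a uniform bit) and keeps each coordinate outside `J` alive independently
with probability `p`, assigning dead coordinates independent uniform bits. -/
def rexpectOutside {n : ℕ} (J : Finset (Fin n)) (p : ℝ)
    (G : Finset (Fin n) → (Fin n → Bool) → ℝ) : ℝ :=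
  ∑ S ∈ Jᶜ.powerset, p ^ S.card * (1 - p) ^ (Jᶜ.card - S.card) * bexpect (fun y => G S y)

/-!
Expanding `f` in the Walsh basis, the coefficient `f̂_ρ({i})` of the restriction `ρ = (S, y)`
is `∑ f̂(T) χ_{T \ S}(y)` over the `T` with `T ∩ S = {i}`; these characters of `y` are
orthonormal, so its mean square over `y` is `∑ f̂(T)²` over the same `T`. Summing over `i ∈ S`,
the expectation in question is `∑_T f̂(T)² · Pr[|T ∩ S| = 1]`. Only the coordinates of `T \ J`
can survive, so with `m = |T \ J|` this probability is `m p (1 - p)^(m - 1)`, and for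
`2^k ≤ m < 2^(k+1)`, `p = 2^(-k)` it is at least `e^(-2) ≥ 1/20`.
-/

lemma one_div_twenty_le_exp_neg_two : 1 / 20 ≤ Real.exp (-2) := by
  have hexp2 : Real.exp 2 < 20 := by
    have := Real.exp_one_lt_d9
    rw [show (2 : ℝ) = 1 + 1 by norm_num, Real.exp_add]
    nlinarith [Real.exp_pos 1]
  rw [Real.exp_neg, one_div]
  exact inv_anti₀ (Real.exp_pos 2) hexp2.le

lemma one_div_twenty_le_mul_mul_one_sub_pow {p : ℝ} {m : ℕ} (hp : 0 ≤ p) (h1 : 1 ≤ m * p)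
    (h2 : (m + 1) * p ≤ 2) : 1 / 20 ≤ m * p * (1 - p) ^ (m - 1) := by
  have hm : 1 ≤ m := Nat.one_le_iff_ne_zero.2 (by rintro rfl; norm_num at h1)
  rcases (show p ≤ 1 by nlinarith).lt_or_eq with hp1 | rfl
  · have hq : 0 < 1 - p := sub_pos.2 hp1
    have hlog : -(p / (1 - p)) ≤ Real.log (1 - p) := by
      have hinv : -(p / (1 - p)) = 1 - (1 - p)⁻¹ := by field_simp; ring
      exact hinv ▸ Real.one_sub_inv_le_log_of_pos hq
    have hexponent : ((m - 1 : ℕ) : ℝ) * (p / (1 - p)) ≤ 2 := by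
      rw [Nat.cast_sub hm, ← mul_div_assoc, div_le_iff₀ hq]
      push_cast
      linarith
    have hpow : Real.exp (-2) ≤ (1 - p) ^ (m - 1) := by
      rw [← Real.exp_log (pow_pos hq _), Real.log_pow, Real.exp_le_exp]
      nlinarith [mul_le_mul_of_nonneg_left hlog (Nat.cast_nonneg (m - 1) : (0 : ℝ) ≤ _)]
    calc (1 : ℝ) / 20 = 1 * (1 / 20) := (one_mul _).symm
      _ ≤ m * p * (1 - p) ^ (m - 1) :=
        mul_le_mul h1 (one_div_twenty_le_exp_neg_two.trans hpow) (by norm_num) (by positivity)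
  · obtain rfl : m = 1 := le_antisymm (by exact_mod_cast (show (m : ℝ) ≤ 1 by linarith)) hm
    norm_num

lemma one_div_twenty_le_of_two_pow_le {k m : ℕ} (h1 : 2 ^ k ≤ m) (h2 : m < 2 ^ (k + 1)) :
    1 / 20 ≤ m * (2 : ℝ)⁻¹ ^ k * (1 - (2 : ℝ)⁻¹ ^ k) ^ (m - 1) := by
  have h1' : (2 : ℝ) ^ k ≤ m := by exact_mod_cast h1
  have h2' : (m + 1 : ℝ) ≤ 2 ^ (k + 1) := by exact_mod_cast h2
  refine one_div_twenty_le_mul_mul_one_sub_pow (by positivity) ?_ ?_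
  · calc (1 : ℝ) = 2 ^ k * (2 : ℝ)⁻¹ ^ k := by rw [← mul_pow]; norm_num
      _ ≤ m * (2 : ℝ)⁻¹ ^ k := by gcongr
  · calc (m + 1 : ℝ) * (2 : ℝ)⁻¹ ^ k ≤ 2 ^ (k + 1) * (2 : ℝ)⁻¹ ^ k := by gcongr
      _ = 2 := by rw [pow_succ, mul_right_comm, ← mul_pow]; norm_num

section AliveWeight

variable {α : Type*} (p : ℝ)

def aliveWeight (C S : Finset α) : ℝ := p ^ #S * (1 - p) ^ (#C - #S)

variable {p}

lemma sum_powerset_card_eq_one_aliveWeight (A : Finset α) :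
    ∑ S ∈ A.powerset with #S = 1, aliveWeight p A S = #A * p * (1 - p) ^ (#A - 1) := by
  rw [← powersetCard_eq_filter, sum_congr rfl fun S hS => by
    rw [aliveWeight, (mem_powersetCard.1 hS).2, pow_one], sum_const, card_powersetCard,
    Nat.choose_one_right, nsmul_eq_mul, mul_assoc]

variable [DecidableEq α]

lemma aliveWeight_insert {b : α} {C S : Finset α} (hb : b ∉ C) (hS : S ⊆ C) :
    aliveWeight p (insert b C) S = (1 - p) * aliveWeight p C S := by
  rw [aliveWeight, aliveWeight, card_insert_of_notMem hb, Nat.sub_add_comm (card_le_card hS),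
    pow_succ]
  ring

lemma aliveWeight_insert_insert {b : α} {C S : Finset α} (hb : b ∉ C) (hS : S ⊆ C) :
    aliveWeight p (insert b C) (insert b S) = p * aliveWeight p C S := by
  rw [aliveWeight, aliveWeight, card_insert_of_notMem hb,
    card_insert_of_notMem (notMem_mono hS hb), Nat.add_sub_add_right, pow_succ]
  ring

/-- The coordinates of `D` are independent of those of `A` and can be summed out. -/
lemma sum_powerset_union_mul_aliveWeight {A D : Finset α} (hAD : Disjoint A D)
    (F : Finset α → ℝ) :
    ∑ S ∈ (A ∪ D).powerset, F (S ∩ A) * aliveWeight p (A ∪ D) S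
      = ∑ S ∈ A.powerset, F S * aliveWeight p A S := by
  induction D using Finset.induction_on with
  | empty =>
    rw [union_empty]
    exact sum_congr rfl fun S hS => by rw [inter_eq_left.2 (mem_powerset.1 hS)]
  | insert b D hbD ih =>
    obtain ⟨hbA, hAD⟩ := disjoint_insert_right.1 hAD
    have hb : b ∉ A ∪ D := by simp [hbA, hbD]
    rw [union_insert, sum_powerset_insert hb, ← sum_add_distrib, ← ih hAD]
    refine sum_congr rfl fun S hS => ?_
    rw [aliveWeight_insert hb (mem_powerset.1 hS), insert_inter_of_notMem hbA,
      aliveWeight_insert_insert hb (mem_powerset.1 hS)]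
    ring

theorem sum_powerset_card_inter_eq_one_aliveWeight (T C : Finset α) :
    ∑ S ∈ C.powerset with #(T ∩ S) = 1, aliveWeight p C S
      = #(T ∩ C) * p * (1 - p) ^ (#(T ∩ C) - 1) := by
  have hC : C = (T ∩ C) ∪ (C \ T) := by
    rw [inter_comm, union_comm, sdiff_union_inter]
  have hdisj : Disjoint (T ∩ C) (C \ T) := disjoint_sdiff.mono_left inter_subset_left
  have hinter : ∀ S ∈ C.powerset, T ∩ S = S ∩ (T ∩ C) := fun S hS => by
    rw [inter_comm T C, ← inter_assoc, inter_eq_left.2 (mem_powerset.1 hS), inter_comm]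
  calc ∑ S ∈ C.powerset with #(T ∩ S) = 1, aliveWeight p C S
      = ∑ S ∈ C.powerset, (fun S' => if #S' = 1 then (1 : ℝ) else 0) (S ∩ (T ∩ C))
          * aliveWeight p C S := by
        rw [sum_filter]
        exact sum_congr rfl fun S hS => by rw [hinter S hS, ite_mul, one_mul, zero_mul]
    _ = ∑ S ∈ (T ∩ C).powerset, (if #S = 1 then (1 : ℝ) else 0) * aliveWeight p (T ∩ C) S := by
        have hmarginal := sum_powerset_union_mul_aliveWeight (p := p) hdisj
          fun S' => if #S' = 1 then (1 : ℝ) else 0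
        rwa [← hC] at hmarginal
    _ = _ := by
        simp only [ite_mul, one_mul, zero_mul]
        rw [← sum_filter, sum_powerset_card_eq_one_aliveWeight]

end AliveWeight

section BooleanCube

variable {n : ℕ}

lemma prod_ite_two_zero {ι : Type*} [Fintype ι] (P : ι → Prop) [DecidablePred P] :
    ∏ i, (if P i then (2 : ℝ) else 0) = if ∀ i, P i then 2 ^ Fintype.card ι else 0 := by
  rw [Fintype.prod_ite_zero, prod_const, card_univ]

lemma bexpect_sum {ι : Type*} (s : Finset ι) (F : ι → (Fin n → Bool) → ℝ) :
    bexpect (fun y => ∑ t ∈ s, F t y) = ∑ t ∈ s, bexpect (F t) := by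
  simp only [bexpect, ← sum_div]
  rw [sum_comm]

lemma bexpect_const_mul (c : ℝ) (F : (Fin n → Bool) → ℝ) :
    bexpect (fun y => c * F y) = c * bexpect F := by
  simp only [bexpect, ← mul_sum, mul_div_assoc]

lemma chiB_eq_prod_ite (S : Finset (Fin n)) (x : Fin n → Bool) :
    chiB S x = ∏ i, if i ∈ S then sgnB (x i) else 1 :=
  (Fintype.prod_ite_mem S _).symm

lemma sum_chiB_mul_chiB (A B : Finset (Fin n)) :
    ∑ x, chiB A x * chiB B x = if A = B then (2 : ℝ) ^ n else 0 := by
  have hfactor : ∀ i, ∑ b : Bool, (if i ∈ A then sgnB b else 1) * (if i ∈ B then sgnB b else 1)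
      = if (i ∈ A ↔ i ∈ B) then (2 : ℝ) else 0 := by
    intro i
    by_cases hA : i ∈ A <;> by_cases hB : i ∈ B <;> norm_num [hA, hB, sgnB]
  simp only [chiB_eq_prod_ite, ← prod_mul_distrib]
  rw [← Fintype.prod_sum fun i b => (if i ∈ A then sgnB b else 1) * (if i ∈ B then sgnB b else 1),
    Finset.prod_congr rfl fun i _ => hfactor i, prod_ite_two_zero, Fintype.card_fin]
  congr 1
  exact propext Finset.ext_iff.symm

lemma bexpect_chiB_mul_chiB (A B : Finset (Fin n)) :
    bexpect (fun x => chiB A x * chiB B x) = if A = B then 1 else 0 := by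
  rw [bexpect, sum_chiB_mul_chiB]
  split_ifs <;> simp

lemma sum_chiB_mul_chiB_dual (x x' : Fin n → Bool) :
    ∑ T, chiB T x * chiB T x' = if x = x' then (2 : ℝ) ^ n else 0 := by
  have hfactor : ∀ i, 1 + sgnB (x i) * sgnB (x' i) = if x i = x' i then (2 : ℝ) else 0 := by
    intro i
    cases x i <;> cases x' i <;> norm_num [sgnB]
  simp only [chiB, ← prod_mul_distrib]
  rw [← powerset_univ, ← prod_one_add, Finset.prod_congr rfl fun i _ => hfactor i,
    prod_ite_two_zero, Fintype.card_fin]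
  congr 1
  exact propext funext_iff.symm

theorem sum_fCoeff_mul_chiB (f : (Fin n → Bool) → ℝ) (x : Fin n → Bool) :
    ∑ T, fCoeff f T * chiB T x = f x := by
  calc ∑ T, fCoeff f T * chiB T x
      = ∑ T, bexpect fun x' => chiB T x * (f x' * chiB T x') := by
        simp only [fCoeff, bexpect_const_mul, mul_comm]
    _ = bexpect fun x' => f x' * ∑ T, chiB T x' * chiB T x := by
        rw [← bexpect_sum]
        simp only [mul_sum, mul_comm, mul_left_comm]
    _ = f x := by
        simp only [sum_chiB_mul_chiB_dual, mul_ite, mul_zero, bexpect, sum_ite_eq', mem_univ,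
          if_true]
        field_simp

lemma bexpect_sq_sum_mul_chiB {ι : Type*} (s : Finset ι) (a : ι → ℝ) (V : ι → Finset (Fin n))
    (hV : Set.InjOn V s) :
    bexpect (fun y => (∑ t ∈ s, a t * chiB (V t) y) ^ 2) = ∑ t ∈ s, a t ^ 2 := by
  simp only [sq, sum_mul_sum, mul_mul_mul_comm, bexpect_sum, bexpect_const_mul,
    bexpect_chiB_mul_chiB, mul_ite, mul_one, mul_zero]
  refine sum_congr rfl fun t ht => ?_
  rw [sum_eq_single_of_mem t ht, if_pos rfl]
  exact fun t' ht' hne => if_neg fun h => hne (hV ht' ht h.symm)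

lemma chiB_piecewise (T S : Finset (Fin n)) (z y : Fin n → Bool) :
    chiB T (fun i => if i ∈ S then z i else y i) = chiB (T ∩ S) z * chiB (T \ S) y := by
  rw [chiB, prod_apply_ite, filter_mem_eq_inter, ← sdiff_eq_filter, chiB, chiB]

lemma fCoeff_restrictFn (f : (Fin n → Bool) → ℝ) (S U : Finset (Fin n)) (y : Fin n → Bool) :
    fCoeff (restrictFn f S y) U = ∑ T with T ∩ S = U, fCoeff f T * chiB (T \ S) y := by
  calc fCoeff (restrictFn f S y) U
      = bexpect fun z => ∑ T, fCoeff f T * chiB (T \ S) y * (chiB (T ∩ S) z * chiB U z) := by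
        rw [fCoeff]
        congr 1
        funext z
        rw [restrictFn, ← sum_fCoeff_mul_chiB f, sum_mul]
        simp only [chiB_piecewise, mul_assoc, mul_left_comm]
    _ = ∑ T, if T ∩ S = U then fCoeff f T * chiB (T \ S) y else 0 := by
        simp only [bexpect_sum, bexpect_const_mul, bexpect_chiB_mul_chiB, mul_ite, mul_one,
          mul_zero]
    _ = _ := (sum_filter _ _).symm

lemma bexpect_fCoeff_restrictFn_sq (f : (Fin n → Bool) → ℝ) (S U : Finset (Fin n)) :
    bexpect (fun y => fCoeff (restrictFn f S y) U ^ 2) = ∑ T with T ∩ S = U, fCoeff f T ^ 2 := by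
  simp only [fCoeff_restrictFn]
  refine bexpect_sq_sum_mul_chiB _ _ (· \ S) fun T hT T' hT' hTT' => ?_
  rw [← sdiff_union_inter T S, ← sdiff_union_inter T' S, show T \ S = T' \ S from hTT',
    (mem_filter.1 hT).2, (mem_filter.1 hT').2]

lemma filter_card_inter_eq_one_eq_biUnion (S : Finset (Fin n)) :
    ({T | #(T ∩ S) = 1} : Finset (Finset (Fin n))) = S.biUnion fun i => {T | T ∩ S = {i}} := by
  ext T
  simp only [mem_filter, mem_univ, true_and, mem_biUnion, card_eq_one]
  constructor
  · rintro ⟨i, hi⟩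
    exact ⟨i, (mem_inter.1 (hi ▸ mem_singleton_self i)).2, hi⟩
  · rintro ⟨i, -, hi⟩
    exact ⟨i, hi⟩

theorem bexpect_sum_fCoeff_restrictFn_singleton_sq (f : (Fin n → Bool) → ℝ)
    (S : Finset (Fin n)) :
    bexpect (fun y => ∑ i ∈ S, fCoeff (restrictFn f S y) {i} ^ 2)
      = ∑ T with #(T ∩ S) = 1, fCoeff f T ^ 2 := by
  rw [bexpect_sum, filter_card_inter_eq_one_eq_biUnion, sum_biUnion]
  · simp only [bexpect_fCoeff_restrictFn_sq]
  · intro i _ j _ hij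
    exact disjoint_filter.2 fun T _ hi hj => hij (singleton_injective (hi.symm.trans hj))

theorem rexpectOutside_sum_fCoeff_restrictFn_singleton_sq (f : (Fin n → Bool) → ℝ)
    (J : Finset (Fin n)) (p : ℝ) :
    rexpectOutside J p (fun S y => ∑ i ∈ S, fCoeff (restrictFn f S y) {i} ^ 2)
      = ∑ T, fCoeff f T ^ 2 * (#(T \ J) * p * (1 - p) ^ (#(T \ J) - 1)) := by
  simp only [rexpectOutside, bexpect_sum_fCoeff_restrictFn_singleton_sq, sum_filter, mul_sum]
  rw [sum_comm]
  refine sum_congr rfl fun T _ => ?_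
  rw [sdiff_eq_inter_compl, ← sum_powerset_card_inter_eq_one_aliveWeight, mul_sum, sum_filter]
  refine sum_congr rfl fun S _ => ?_
  split_ifs
  · rw [aliveWeight]
    ring
  · simp

end BooleanCube

theorem level_one_mass_general (n : ℕ) (f : (Fin n → Bool) → ℝ) (J : Finset (Fin n)) (k : ℕ)
    (μ : ℝ)
    (h : (∑ T ∈ univ.filter (fun T : Finset (Fin n) =>
        2 ^ k ≤ (T \ J).card ∧ (T \ J).card < 2 ^ (k + 1)), fCoeff f T ^ 2) ≥ μ) :
    rexpectOutside J ((2:ℝ)⁻¹ ^ k)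
        (fun S y => ∑ i ∈ S, fCoeff (restrictFn f S y) {i} ^ 2)
      ≥ μ / 20 := by
  set p : ℝ := (2 : ℝ)⁻¹ ^ k
  have hq : 0 ≤ 1 - p := sub_nonneg.2 (pow_le_one₀ (by norm_num) (by norm_num))
  rw [ge_iff_le, rexpectOutside_sum_fCoeff_restrictFn_singleton_sq]
  calc μ / 20
      ≤ ∑ T with 2 ^ k ≤ #(T \ J) ∧ #(T \ J) < 2 ^ (k + 1), fCoeff f T ^ 2 * (1 / 20) := by
        rw [← sum_mul]
        linarith
    _ ≤ ∑ T with 2 ^ k ≤ #(T \ J) ∧ #(T \ J) < 2 ^ (k + 1),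
          fCoeff f T ^ 2 * (#(T \ J) * p * (1 - p) ^ (#(T \ J) - 1)) :=
        sum_le_sum fun T hT => mul_le_mul_of_nonneg_left
          (one_div_twenty_le_of_two_pow_le (mem_filter.1 hT).2.1 (mem_filter.1 hT).2.2)
          (sq_nonneg _)
    _ ≤ ∑ T, fCoeff f T ^ 2 * (#(T \ J) * p * (1 - p) ^ (#(T \ J) - 1)) :=
        sum_le_sum_of_subset_of_nonneg (filter_subset _ _) fun T _ _ =>
          mul_nonneg (sq_nonneg _) (mul_nonneg (by positivity) (pow_nonneg hq _))

/-- restrictions with suitable survival probability place large Fourier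
mass on the linear level. -/
theorem level_one_mass (n : ℕ) (f : (Fin n → Bool) → ℝ) (J : Finset (Fin n)) (k : ℕ)
    (μ : ℝ) (hμ : 0 ≤ μ)
    (h : (∑ T ∈ univ.filter (fun T : Finset (Fin n) =>
        2 ^ k ≤ (T \ J).card ∧ (T \ J).card < 2 ^ (k + 1)), fCoeff f T ^ 2) ≥ μ) :
    rexpectOutside J ((2:ℝ)⁻¹ ^ k)
        (fun S y => ∑ i ∈ S, fCoeff (restrictFn f S y) {i} ^ 2)
      ≥ μ / 20 :=
  level_one_mass_general n f J k μ h
end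
end

section
/- Let a_1, a_2, …, a_n be non-negative real numbers and let L be an integer with 1 ≤ L ≤ n. Suppose a_i ≤ (a_1 + a_2 + ⋯ + a_n)/(2L) for all 1 ≤ i ≤ n. Then there exists a partition (B_1, B_2, …, B_L) of [n] into L pairwise disjoint sets whose union is [n] such that for every 1 ≤ j ≤ L, Σ_{i ∈ B_j} a_i ≥ (a_1 + ⋯ + a_n)/(2L). -/
open Finset

noncomputable section

/-- balanced partition of a set of small weights. -/
theorem balanced_partition (n L : ℕ) (a : Fin n → ℝ) (ha : ∀ i, 0 ≤ a i)
    (hL1 : 1 ≤ L) (hLn : L ≤ n)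
    (hbound : ∀ i, a i ≤ (∑ i, a i) / (2 * L)) :
    ∃ B : Fin L → Finset (Fin n),
      (∀ j j' : Fin L, j ≠ j' → Disjoint (B j) (B j')) ∧
      (∀ i : Fin n, ∃ j : Fin L, i ∈ B j) ∧
      (∀ j : Fin L, (∑ i ∈ B j, a i) ≥ (∑ i, a i) / (2 * L)) := by
    classical
  set T := ∑ i, a i with hTdef
  set t := T / (2 * L) with htdef
  have hLpos : (0:ℝ) < (L:ℝ) := by exact_mod_cast hL1
  have hT0 : 0 ≤ T := Finset.sum_nonneg fun i _ => ha i
  have ht0 : 0 ≤ t := div_nonneg hT0 (by linarith)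
  have hTt : T = 2 * t * L := by
    rw [htdef]; field_simp
  -- extended weights and prefix sums
  set a' : ℕ → ℝ := fun m => if h : m < n then a ⟨m, h⟩ else 0 with ha'def
  set s : ℕ → ℝ := fun m => ∑ k ∈ Finset.range m, a' k with hsdef
  have ha'0 : ∀ m, 0 ≤ a' m := by
    intro m; rw [ha'def]; dsimp only; split
    · exact ha _
    · exact le_rfl
  have ha't : ∀ m, a' m ≤ t := by
    intro m; rw [ha'def]; dsimp only; split
    · exact hbound _
    · exact ht0
  have hsmono : ∀ {m m'}, m ≤ m' → s m ≤ s m' := by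
    intro m m' h
    exact Finset.sum_le_sum_of_subset_of_nonneg (Finset.range_subset_range.2 h)
      (fun k _ _ => ha'0 k)
  have hsn : s n = T := by
    rw [hsdef, hTdef]; dsimp only
    rw [← Fin.sum_univ_eq_sum_range (fun m => a' m) n]
    refine Finset.sum_congr rfl fun i _ => ?_
    rw [ha'def]; dsimp only; rw [dif_pos i.isLt]
  have hs0 : s 0 = 0 := by simp [hsdef]
  have hssucc : ∀ m, s (m + 1) = s m + a' m := by
    intro m; rw [hsdef]; dsimp only; rw [Finset.sum_range_succ]
  -- the cut points
  have hex : ∀ j : ℕ, ∃ m, 2 * t * j ≤ s m ∨ n ≤ m := fun j => ⟨n, Or.inr le_rfl⟩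
  set b : ℕ → ℕ := fun j => Nat.find (hex j) with hbdef
  have hb_le_n : ∀ j, b j ≤ n := fun j => Nat.find_le (Or.inr le_rfl)
  have hbs : ∀ j, j ≤ L → 2 * t * j ≤ s (b j) := by
    intro j hj
    rcases Nat.find_spec (hex j) with h | h
    · exact h
    · have : b j = n := le_antisymm (hb_le_n j) h
      rw [this, hsn, hTt]
      have : (j:ℝ) ≤ L := by exact_mod_cast hj
      nlinarith
  have hmin : ∀ j m, m < b j → s m < 2 * t * j ∧ m < n := by
    intro j m hm
    have := Nat.find_min (hex j) hm
    push_neg at this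
    exact ⟨this.1, this.2⟩
  have hbmono : ∀ {j j'}, j ≤ j' → b j ≤ b j' := by
    intro j j' h
    refine Nat.find_mono fun m hm => ?_
    rcases hm with hm | hm
    · left
      refine le_trans ?_ hm
      have : (j:ℝ) ≤ (j':ℝ) := by exact_mod_cast h
      nlinarith
    · exact Or.inr hm
  have hb0 : b 0 = 0 := by
    have : 2 * t * (0:ℕ) ≤ s 0 ∨ n ≤ 0 := by left; rw [hs0]; simp
    exact Nat.le_zero.1 (Nat.find_le this)
  have hub : ∀ j, s (b j) ≤ 2 * t * j + t := by
    intro j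
    rcases Nat.eq_zero_or_pos (b j) with h | h
    · rw [h, hs0]
      have : (0:ℝ) ≤ 2 * t * j := by positivity
      linarith
    · obtain ⟨m, hm⟩ := Nat.exists_eq_add_of_lt h
      rw [zero_add] at hm
      have hmlt : m < b j := by omega
      have := (hmin j m hmlt).1
      rw [hm, hssucc]
      have := ha't m
      linarith
  -- block boundaries
  set e : ℕ → ℕ := fun j => if j = L - 1 then n else b (j + 1) with hedef
  have he_le_n : ∀ j, e j ≤ n := by
    intro j; rw [hedef]; dsimp only; split
    · exact le_rfl
    · exact hb_le_n _
  have hse : ∀ j, j < L → 2 * t * (j + 1) ≤ s (e j) := by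
    intro j hj
    rw [hedef]; dsimp only; split
    · rename_i hjL
      have hjL' : j + 1 = L := by omega
      rw [hsn, hTt, ← hjL']
      push_cast
      linarith
    · have h1 : j + 1 ≤ L := hj
      have := hbs (j + 1) h1
      push_cast at this ⊢
      linarith
  have hbe : ∀ j, j < L → b j ≤ e j := by
    intro j hj; rw [hedef]; dsimp only; split
    · exact hb_le_n j
    · exact hbmono (Nat.le_succ j)
  -- the partition
  refine ⟨fun j => univ.filter (fun i : Fin n => b j.val ≤ i.val ∧ i.val < e j.val),
    ?_, ?_, ?_⟩
  · intro j j' hne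
    have key : ∀ (j j' : Fin L), j.val < j'.val →
        Disjoint (univ.filter (fun i : Fin n => b j.val ≤ i.val ∧ i.val < e j.val))
          (univ.filter (fun i : Fin n => b j'.val ≤ i.val ∧ i.val < e j'.val)) := by
      intro j j' hlt
      rw [Finset.disjoint_left]
      intro i hi hi'
      simp only [Finset.mem_filter, Finset.mem_univ, true_and] at hi hi'
      have hjne : j.val ≠ L - 1 := by have := j'.isLt; omega
      have he : e j.val = b (j.val + 1) := by rw [hedef]; dsimp only; rw [if_neg hjne]
      have : b (j.val + 1) ≤ b j'.val := hbmono (by omega)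
      omega
    rcases lt_or_gt_of_ne (fun h : j.val = j'.val => hne (Fin.ext h)) with h | h
    · exact key j j' h
    · exact (key j' j h).symm
  · intro i
    have h0J : 0 ∈ (Finset.range L).filter (fun j => b j ≤ i.val) := by
      simp only [Finset.mem_filter, Finset.mem_range]
      exact ⟨by omega, by simp [hb0]⟩
    set J := (Finset.range L).filter (fun j => b j ≤ i.val) with hJdef
    have hJne : J.Nonempty := ⟨0, h0J⟩
    set jm := J.max' hJne with hjm
    have hjmem : jm ∈ J := J.max'_mem hJne
    simp only [hJdef, Finset.mem_filter, Finset.mem_range] at hjmem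
    refine ⟨⟨jm, hjmem.1⟩, ?_⟩
    simp only [Finset.mem_filter, Finset.mem_univ, true_and]
    refine ⟨hjmem.2, ?_⟩
    rw [hedef]; dsimp only
    split
    · exact i.isLt
    · rename_i hne'
      by_contra hle
      push_neg at hle
      have : jm + 1 ∈ J := by
        simp only [hJdef, Finset.mem_filter, Finset.mem_range]
        exact ⟨by omega, hle⟩
      have := Finset.le_max' J _ this
      omega
  · intro j
    have hjL : j.val < L := j.isLt
    have hsum : (∑ i ∈ univ.filter (fun i : Fin n => b j.val ≤ i.val ∧ i.val < e j.val), a i)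
        = s (e j.val) - s (b j.val) := by
      have step1 : (∑ i ∈ univ.filter (fun i : Fin n => b j.val ≤ i.val ∧ i.val < e j.val), a i)
          = ∑ i : Fin n, if b j.val ≤ i.val ∧ i.val < e j.val then a' i.val else 0 := by
        rw [Finset.sum_filter]
        refine Finset.sum_congr rfl fun i _ => ?_
        congr 1
        rw [ha'def]; dsimp only; rw [dif_pos i.isLt]
      rw [step1, Fin.sum_univ_eq_sum_range (fun m => if b j.val ≤ m ∧ m < e j.val then a' m else 0) n,
        ← Finset.sum_filter]
      have hset : (Finset.range n).filter (fun m => b j.val ≤ m ∧ m < e j.val)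
          = Finset.Ico (b j.val) (e j.val) := by
        ext m
        simp only [Finset.mem_filter, Finset.mem_range, Finset.mem_Ico]
        have := he_le_n j.val
        omega
      rw [hset, Finset.sum_Ico_eq_sub _ (hbe j.val hjL)]
    rw [hsum]
    have h1 := hse j.val hjL
    have h2 := hub j.val
    push_cast at h1
    linarith
end
end
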